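/- For every a ∈ ℤ/d and every integer k with 0 ≤ k ≤ d − 2, the following identity holds in R: P_{[a, a+k]} = Σ_{r=0}^{k+1} p^r · L_{[a, a+k+1] \ {a+r}}, where [a, a+k] := {a + j : 0 ≤ j ≤ k} ⊆ ℤ/d. -/

import Mathlib

open MvPolynomial Finset

noncomputable section

/-- The ideal of `ℚ[x_i : i ∈ ℤ/d]` generated by the squares of the variables. -/
def sqIdeal (d : ℕ) : Ideal (MvPolynomial (ZMod d) ℚ) :=
  Ideal.span (Set.range fun i : ZMod d => (X i) ^ 2)

/-- The ring `R = ℚ[x_i : i ∈ ℤ/d]/(x_i²)`. -/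
abbrev ZipRing (d : ℕ) := MvPolynomial (ZMod d) ℚ ⧸ sqIdeal d

/-- The class `l_i` of the variable `x_i` in `R`. -/
def lcl (d : ℕ) (i : ZMod d) : ZipRing d := Ideal.Quotient.mk (sqIdeal d) (X i)

/-- The Hodge–Chern monomial `L_I = ∏_{i ∈ I} l_i`. -/
def Lmon (d : ℕ) (I : Finset (ZMod d)) : ZipRing d := ∏ i ∈ I, lcl d i

/-- `N_i = p·l_i − l_{i+1}`. -/
def Nelt (d p : ℕ) (i : ZMod d) : ZipRing d := (p : ZipRing d) * lcl d i - lcl d (i + 1)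

/-- `P_i = p·l_i + l_{i+1}`. -/
def Pelt (d p : ℕ) (i : ZMod d) : ZipRing d := (p : ZipRing d) * lcl d i + lcl d (i + 1)

/-- The strata class `N_I = ∏_{i ∈ I} N_i`. -/
def Nmon (d p : ℕ) (I : Finset (ZMod d)) : ZipRing d := ∏ i ∈ I, Nelt d p i

/-- `P_I = ∏_{i ∈ I} P_i`. -/
def Pmon (d p : ℕ) (I : Finset (ZMod d)) : ZipRing d := ∏ i ∈ I, Pelt d p i

/-- The interval `[a, a+k] = {a, a+1, …, a+k} ⊆ ℤ/d`. -/
def intvl (d : ℕ) (a : ZMod d) (k : ℕ) : Finset (ZMod d) :=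
  (Finset.range (k + 1)).image fun j : ℕ => a + (j : ZMod d)

/-! Because `l_i² = 0`, expanding `∏_{j<n} (c·x_j + x_{j+1})` leaves only the choices that pick
pairwise distinct variables: `c·x_j` for `j < r` and `x_{j+1}` for `j ≥ r`, which contributes
`c^r ∏_{j ≤ n, j ≠ r} x_j`. For `k + 2 ≤ d` the map `j ↦ a + j` is injective on `{0, …, k+1}`,
so the interval products in `ℤ/d` are such products over `ℕ`. -/

theorem Finset.prod_range_mul_add_succ_of_mul_self_eq_zero {A : Type*} [CommSemiring A]
    (c : A) {x : ℕ → A} (hx : ∀ j, x j * x j = 0) (n : ℕ) :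
    ∏ j ∈ range n, (c * x j + x (j + 1)) =
      ∑ r ∈ range (n + 1), c ^ r * ∏ j ∈ (range (n + 1)).erase r, x j := by
  induction n with
  | zero => simp
  | succ n ih =>
    have hlast : (∑ r ∈ range (n + 1), c ^ r * ∏ j ∈ (range (n + 1)).erase r, x j) * x n =
        c ^ n * ∏ j ∈ range (n + 1), x j := by
      rw [sum_mul, sum_eq_single_of_mem n (self_mem_range_succ n)]
      · rw [range_add_one, erase_insert notMem_range_self, prod_insert notMem_range_self,
          mul_assoc, mul_comm (x n)]
      · intro r _ hrn
        have hn : n ∈ (range (n + 1)).erase r := mem_erase.2 ⟨Ne.symm hrn, self_mem_range_succ n⟩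
        rw [mul_assoc, ← prod_erase_mul _ _ hn, mul_assoc, hx, mul_zero, mul_zero]
    have hnext : ∀ r ∈ range (n + 1),
        (∏ j ∈ (range (n + 1)).erase r, x j) * x (n + 1) = ∏ j ∈ (range (n + 2)).erase r, x j := by
      intro r hr
      rw [range_add_one (n := n + 1), erase_insert_of_ne (by grind), prod_insert (by simp), mul_comm]
    rw [prod_range_succ, ih, sum_range_succ _ (n + 1), mul_add, ← mul_assoc, mul_comm _ c,
      mul_assoc, hlast, sum_mul, add_comm]
    congr 1
    · exact sum_congr rfl fun r hr => by rw [mul_assoc, hnext r hr]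
    · rw [range_add_one (n := n + 1), erase_insert notMem_range_self, pow_succ', mul_assoc]

theorem Finset.image_erase_of_injOn {α β : Type*} [DecidableEq α] [DecidableEq β] {f : α → β}
    {s : Finset α} (hf : Set.InjOn f s) {a : α} (ha : a ∈ s) :
    (s.erase a).image f = (s.image f).erase (f a) := by
  ext y
  simp only [mem_image, mem_erase]
  constructor
  · rintro ⟨b, ⟨hba, hb⟩, rfl⟩
    exact ⟨fun h => hba (hf hb ha h), b, hb, rfl⟩
  · rintro ⟨hy, b, hb, rfl⟩
    exact ⟨b, ⟨fun h => hy (h ▸ rfl), hb⟩, rfl⟩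

theorem ZMod.natCast_injOn_range {d m : ℕ} (h : m ≤ d) :
    Set.InjOn (Nat.cast : ℕ → ZMod d) (range m) := by
  intro i hi j hj hij
  rw [coe_range, Set.mem_Iio] at hi hj
  rwa [ZMod.natCast_eq_natCast_iff', Nat.mod_eq_of_lt (by omega), Nat.mod_eq_of_lt (by omega)] at hij

theorem lcl_mul_self (d : ℕ) (i : ZMod d) : lcl d i * lcl d i = 0 := by
  rw [lcl, ← map_mul, ← sq, Ideal.Quotient.eq_zero_iff_mem]
  exact Ideal.subset_span ⟨i, rfl⟩

theorem stmt5_general (d p : ℕ) (a : ZMod d) (k : ℕ)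
    (hk : (k : ℤ) ≤ (d : ℤ) - 2) :
    Pmon d p (intvl d a k) =
      ∑ r ∈ Finset.range (k + 2),
        (p : ℚ) ^ r • Lmon d ((intvl d a (k + 1)).erase (a + (r : ZMod d))) := by
  have hinj : Set.InjOn (fun j : ℕ => a + (j : ZMod d)) (range (k + 2)) :=
    (add_right_injective a).comp_injOn (ZMod.natCast_injOn_range (by omega))
  have hP : Pmon d p (intvl d a k) =
      ∏ j ∈ range (k + 1), ((p : ZipRing d) * lcl d (a + j) + lcl d (a + (j + 1 : ℕ))) := by
    rw [Pmon, intvl, prod_image (hinj.mono (by simp))]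
    simp only [Pelt, Nat.cast_succ, add_assoc]
  have hL : ∀ r ∈ range (k + 2), Lmon d ((intvl d a (k + 1)).erase (a + r)) =
      ∏ j ∈ (range (k + 2)).erase r, lcl d (a + j) := by
    intro r hr
    rw [Lmon, intvl, ← image_erase_of_injOn hinj hr, prod_image (hinj.mono (erase_subset _ _))]
  rw [hP, prod_range_mul_add_succ_of_mul_self_eq_zero _ (fun j => lcl_mul_self d _)]
  refine sum_congr rfl fun r hr => ?_
  rw [hL r hr, ← Nat.cast_pow, ← Nat.cast_pow, Nat.cast_smul_eq_nsmul, nsmul_eq_mul]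

/-- `P_{[a,a+k]} = Σ_{r=0}^{k+1} p^r · L_{[a,a+k+1] \ {a+r}}` for `0 ≤ k ≤ d − 2`. -/
theorem stmt5 (d p : ℕ) [NeZero d] (hp : p.Prime) (a : ZMod d) (k : ℕ)
    (hk : (k : ℤ) ≤ (d : ℤ) - 2) :
    Pmon d p (intvl d a k) =
      ∑ r ∈ Finset.range (k + 2),
        (p : ℚ) ^ r • Lmon d ((intvl d a (k + 1)).erase (a + (r : ZMod d))) :=
  stmt5_general d p a k hk
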